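/- (Retract Lemma) Let G be a finite simple connected graph and let H be a connected subgraph of G that is a retract of G, i.e., there is a map φ : V(G) → V(H) with φ(w) = w for every vertex w of H and such that φ(u)φ(v) is an edge of H whenever uv is an edge of G. Then π(H) ≤ π(G). -/

import Mathlib

namespace Pebbling

variable {V : Type*}

/-- A single pebbling move on configurations: remove two pebbles from `u`
(which must have at least two) and add one pebble to an adjacent vertex `w`. -/
def Move (G : SimpleGraph V) (C C' : V → ℕ) : Prop := by
  classical
  exact ∃ u w, G.Adj u w ∧ 2 ≤ C u ∧
    C' = Function.update (Function.update C u (C u - 2)) w (C w + 1)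

/-- A configuration `C` is `r`-solvable if some finite sequence of pebbling moves
starting from `C` produces a configuration with at least one pebble on `r`. -/
def Solvable (G : SimpleGraph V) (C : V → ℕ) (r : V) : Prop :=
  ∃ C', Relation.ReflTransGen (Move G) C C' ∧ 1 ≤ C' r

/-- The pebbling number `π(G, r)`: the least `t` such that every configuration of
size `t` is `r`-solvable. -/
noncomputable def pebblingNumberTo [Fintype V] (G : SimpleGraph V) (r : V) : ℕ :=
  sInf {t | ∀ C : V → ℕ, ∑ x, C x = t → Solvable G C r}

/-- The pebbling number `π(G)`: the maximum of `π(G, r)` over all vertices `r`. -/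
noncomputable def pebblingNumber [Fintype V] (G : SimpleGraph V) : ℕ :=
  Finset.univ.sup fun r => pebblingNumberTo G r

/-- A proper `n`-edge-coloring: a coloring of the edges with `n` colors such that
distinct edges sharing an endpoint receive different colors. -/
def HasProperEdgeColoring (G : SimpleGraph V) (n : ℕ) : Prop :=
  ∃ c : Sym2 V → Fin n, ∀ e₁ ∈ G.edgeSet, ∀ e₂ ∈ G.edgeSet,
    e₁ ≠ e₂ → (∃ x, x ∈ e₁ ∧ x ∈ e₂) → c e₁ ≠ c e₂

/-- A snark: a connected bridgeless cubic simple graph admitting no proper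
3-edge-coloring. -/
def IsSnark [Fintype V] (G : SimpleGraph V) [DecidableRel G.Adj] : Prop :=
  G.Connected ∧ (∀ v, G.degree v = 3) ∧ (∀ e, ¬ G.IsBridge e) ∧
    ¬ HasProperEdgeColoring G 3

/-!
A graph homomorphism `f : G →g G'` carries pebbling moves of `G` to pebbling moves of `G'`
when configurations are pushed forward along `f`. If `f` is surjective with section `s`,
a configuration on `G'` is the pushforward of the configuration on `G` that puts each pile
at its chosen preimage; solving the latter in `G` towards `s w` and pushing the solution
forward solves the former towards `w`, so `π(G', w) ≤ π(G, s w)`. A retraction onto `H`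
is such a surjection. On a connected `G` the number `π(G, r)` is finite, since a configuration
with `2 ^ d(v, r)` pebbles on some vertex `v` is `r`-solvable.
-/

open Function Relation

section Moves

variable {V : Type*} [DecidableEq V] {G : SimpleGraph V}

lemma move_add_single {u w : V} (h : G.Adj u w) (C : V → ℕ) :
    Move G (C + Pi.single u 2) (C + Pi.single w 1) := by
  refine ⟨u, w, h, by simp, funext fun x => ?_⟩
  rcases eq_or_ne x w with rfl | hxw
  · simp [h.ne.symm]
  · rcases eq_or_ne x u with rfl | hxu <;> simp [*]

lemma move_iff_exists_add_single {C C' : V → ℕ} :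
    Move G C C' ↔ ∃ u w, ∃ C₀ : V → ℕ,
      G.Adj u w ∧ C = C₀ + Pi.single u 2 ∧ C' = C₀ + Pi.single w 1 := by
  constructor
  · rintro ⟨u, w, h, h2, rfl⟩
    refine ⟨u, w, update C u (C u - 2), h, funext fun x => ?_, funext fun x => ?_⟩
    · rcases eq_or_ne x u with rfl | hxu <;> simp [*]
    · rcases eq_or_ne x w with rfl | hxw
      · simp [h.ne.symm]
      · rcases eq_or_ne x u with rfl | hxu <;> simp [*]
  · rintro ⟨u, w, C₀, h, rfl, rfl⟩
    exact move_add_single h C₀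

lemma reflTransGen_move_add_single {u w : V} (h : G.Adj u w) (C : V → ℕ) (m : ℕ) :
    ReflTransGen (Move G) (C + Pi.single u (2 * m)) (C + Pi.single w m) := by
  induction m generalizing C with
  | zero => simp [ReflTransGen.refl]
  | succ m ih =>
    have hstep :
        Move G (C + Pi.single u (2 * (m + 1))) (C + Pi.single w 1 + Pi.single u (2 * m)) := by
      rw [mul_add, mul_one, Pi.single_add, ← add_assoc, add_right_comm C (Pi.single w 1)]
      exact move_add_single h _
    rw [show C + Pi.single w (m + 1) = C + Pi.single w 1 + Pi.single w m by
      rw [add_assoc, ← Pi.single_add, add_comm 1 m]]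
    exact ReflTransGen.head hstep (ih _)

end Moves

section Solvability

variable {V : Type*} {G : SimpleGraph V} {C C' : V → ℕ} {r : V}

lemma Solvable.of_reflTransGen (h : ReflTransGen (Move G) C C') (hC' : Solvable G C' r) :
    Solvable G C r :=
  let ⟨D, hD, hr⟩ := hC'
  ⟨D, h.trans hD, hr⟩

lemma Solvable.of_walk {v : V} (p : G.Walk v r) (hv : 2 ^ p.length ≤ C v) : Solvable G C r := by
  classical
  induction p generalizing C with
  | nil => exact ⟨C, .refl, by simpa using hv⟩
  | @cons v u r h q ih =>
    set m := 2 ^ q.length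
    have hsplit : C = (C - Pi.single v (2 * m)) + Pi.single v (2 * m) := by
      refine funext fun x => ?_
      rcases eq_or_ne x v with rfl | hxv
      · simp only [Pi.add_apply, Pi.sub_apply, Pi.single_eq_same]
        rw [SimpleGraph.Walk.length_cons, pow_succ'] at hv
        omega
      · simp [hxv]
    rw [hsplit]
    exact .of_reflTransGen (reflTransGen_move_add_single h _ m) (ih (by simp))

lemma solvable_of_sum_lt [Fintype V] (hG : G.Connected)
    (hC : ∑ v, (2 ^ G.dist v r - 1) < ∑ v, C v) : Solvable G C r := by
  obtain ⟨v, -, hv⟩ := Finset.exists_lt_of_sum_lt hC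
  obtain ⟨p, hp⟩ := hG.exists_walk_length_eq_dist v r
  exact .of_walk p (by rw [hp]; omega)

end Solvability

section PebblingNumber

variable {V : Type*} [Fintype V] {G : SimpleGraph V} {r : V}

lemma pebblingNumberTo_le {t : ℕ} (h : ∀ C : V → ℕ, ∑ x, C x = t → Solvable G C r) :
    pebblingNumberTo G r ≤ t :=
  Nat.sInf_le h

lemma solvable_of_sum_eq_pebblingNumberTo (hG : G.Connected)
    {C : V → ℕ} (hC : ∑ x, C x = pebblingNumberTo G r) : Solvable G C r := by
  have hne : {t | ∀ C : V → ℕ, ∑ x, C x = t → Solvable G C r}.Nonempty :=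
    ⟨_, fun _ hD => solvable_of_sum_lt hG (hD ▸ Nat.lt_succ_self _)⟩
  exact Nat.sInf_mem hne C hC

end PebblingNumber

section Pushforward

variable {V W X : Type*} [Fintype V]

def push [DecidableEq W] (f : V → W) : (V → ℕ) →+ (W → ℕ) where
  toFun C := ∑ v, Pi.single (f v) (C v)
  map_zero' := by simp
  map_add' C D := by simp [Pi.single_add, Finset.sum_add_distrib]

variable [DecidableEq W]

lemma push_apply (f : V → W) (C : V → ℕ) : push f C = ∑ v, Pi.single (f v) (C v) := rfl

lemma push_single [DecidableEq V] (f : V → W) (v : V) (n : ℕ) :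
    push f (Pi.single v n) = Pi.single (f v) n := by
  rw [push_apply, Finset.sum_eq_single v (fun x _ hx => by simp [hx]) (by simp)]
  simp

lemma push_id [DecidableEq V] (C : V → ℕ) : push id C = C :=
  Finset.univ_sum_single C

lemma push_push [Fintype W] [DecidableEq X] (g : W → X) (f : V → W) (C : V → ℕ) :
    push g (push f C) = push (g ∘ f) C := by
  rw [push_apply f, map_sum, push_apply]
  simp [push_single]

lemma sum_push [Fintype W] (f : V → W) (C : V → ℕ) : ∑ w, push f C w = ∑ v, C v := by
  simp only [push_apply, Finset.sum_apply]
  rw [Finset.sum_comm]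
  simp

lemma le_push_apply (f : V → W) (C : V → ℕ) (v : V) : C v ≤ push f C (f v) := by
  rw [push_apply, Finset.sum_apply]
  simpa using Finset.single_le_sum (f := fun x => (Pi.single (f x) (C x) : W → ℕ) (f v))
    (fun _ _ => Nat.zero_le _) (Finset.mem_univ v)

end Pushforward

section Homomorphisms

variable {V W : Type*} [Fintype V] [DecidableEq W] {G : SimpleGraph V} {G' : SimpleGraph W}
  {C C' : V → ℕ} {r : V}

lemma Move.map (f : G →g G') (h : Move G C C') : Move G' (push f C) (push f C') := by
  classical
  obtain ⟨u, w, C₀, huw, rfl, rfl⟩ := move_iff_exists_add_single.mp h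
  rw [map_add, map_add, push_single, push_single]
  exact move_add_single (f.map_adj huw) _

lemma Solvable.map (f : G →g G') (h : Solvable G C r) : Solvable G' (push f C) (f r) :=
  let ⟨D, hD, hr⟩ := h
  ⟨push f D, ReflTransGen.lift (push f) (fun _ _ => Move.map f) _ _ hD,
    hr.trans (le_push_apply f D r)⟩

end Homomorphisms

section Surjections

variable {V W : Type*} [Fintype V] [Fintype W] {G : SimpleGraph V} {G' : SimpleGraph W}

lemma pebblingNumberTo_le_of_leftInverse (hG : G.Connected) (f : G →g G') {s : W → V}
    (hs : LeftInverse f s) (w : W) : pebblingNumberTo G' w ≤ pebblingNumberTo G (s w) := by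
  classical
  refine pebblingNumberTo_le fun D hD => ?_
  have hsolv :=
    (solvable_of_sum_eq_pebblingNumberTo hG (C := push s D) (by rw [sum_push, hD])).map f
  rwa [push_push, hs.comp_eq_id, push_id, hs w] at hsolv

lemma pebblingNumber_le_of_surjective (hG : G.Connected) (f : G →g G') (hf : Surjective f) :
    pebblingNumber G' ≤ pebblingNumber G :=
  Finset.sup_le fun w _ =>
    (pebblingNumberTo_le_of_leftInverse hG f (rightInverse_surjInv hf) w).trans
      (Finset.le_sup (f := pebblingNumberTo G) (Finset.mem_univ _))

end Surjections

theorem retract_lemma_general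
    {V : Type*} [Fintype V] (G : SimpleGraph V) (hG : G.Connected)
    (H : G.Subgraph) [Fintype H.verts]
    (φ : V → H.verts)
    (hfix : ∀ w : H.verts, φ (w : V) = w)
    (hhom : ∀ x y : V, G.Adj x y → H.coe.Adj (φ x) (φ y)) :
    pebblingNumber H.coe ≤ pebblingNumber G :=
  pebblingNumber_le_of_surjective hG ⟨φ, hhom _ _⟩ fun w => ⟨w, hfix w⟩

/-- Retract Lemma: if the connected subgraph H of G is a retract of G
(via a map φ fixing the vertices of H and sending every edge of G to an edge of H),
then π(H) ≤ π(G). -/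
theorem retract_lemma
    {V : Type*} [Fintype V] (G : SimpleGraph V) (hG : G.Connected)
    (H : G.Subgraph) [Fintype H.verts] (hH : H.coe.Connected)
    (φ : V → H.verts)
    (hfix : ∀ w : H.verts, φ (w : V) = w)
    (hhom : ∀ x y : V, G.Adj x y → H.coe.Adj (φ x) (φ y)) :
    pebblingNumber H.coe ≤ pebblingNumber G :=
  retract_lemma_general G hG H φ hfix hhom

end Pebbling
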